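/- Let 𝒜 ⊂ ℕ be a finite set of positive integers, let l > 0, and let Q, Q' be distinct points of 𝕋² = ℝ²/ℤ² with rational coordinates. Then there exists C > 0 such that for every line segment L ⊂ 𝕋² with midpoint Q, length at most l, and irrational slope of the form [a_1, a_2, …] with all a_i ∈ 𝒜, one has dist(L, Q') > C. -/

import Mathlib

/-- The value of the finite continued fraction `[a₁,…,aₙ]`. -/
noncomputable def cfFin : List ℕ → ℝ
  | [] => 0
  | a :: l => 1 / ((a : ℝ) + cfFin l)

/-- `α = [a₁, a₂, …]`: the finite truncations of the continued fraction with partial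
quotients `a 0 = a₁, a 1 = a₂, …` converge to `α`. -/
def cfLim (a : ℕ → ℕ) (α : ℝ) : Prop :=
  Filter.Tendsto (fun n => cfFin (List.ofFn fun i : Fin n => a i)) Filter.atTop (nhds α)

/-!
Write the admissible slopes as `α = 1 / (a₀ + β)` with `a₀ ∈ 𝒜` and `β` again admissible, so
`α ∈ [0, 1]`. Each admissible slope keeps a uniform distance from every rational `q`, by induction
on the denominator of `q`: for `q ≤ 0` this holds since `α ≥ 1 / (a₀ + 1)`, and for `q > 0` the
identity `1 / (a₀ + β) - q = -q (β - (q⁻¹ - a₀)) / (a₀ + β)` reduces it to `q⁻¹ - a₀`, which has a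
smaller denominator when `q < 1` and is `≤ 0` when `q ≥ 1`; only finitely many `a₀` occur.
Hence for `(u, v) ∈ ℚ² \ {0}` the quantity `|v - u α|`, and with it the distance from `(u, v)` to
the line of slope `α` through `0`, is bounded below uniformly in `α`. Translates `Q' + (m, n)` far
from `Q` are at distance at least `1` from the segment, and only finitely many are near.
-/

open Set Filter Topology

theorem Set.Finite.exists_pos_forall_le {ι X : Type*} {s : Set ι} (hs : s.Finite) {T : Set X}
    {f : ι → X → ℝ} (h : ∀ i ∈ s, ∃ c > 0, ∀ x ∈ T, c ≤ f i x) :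
    ∃ c > 0, ∀ i ∈ s, ∀ x ∈ T, c ≤ f i x := by
  have hev : ∀ i ∈ s, ∀ᶠ c in 𝓝[>] (0 : ℝ), ∀ x ∈ T, c ≤ f i x := fun i hi ↦ by
    obtain ⟨c, hc, hcf⟩ := h i hi
    filter_upwards [Ioo_mem_nhdsGT hc] with c' hc' x hx using hc'.2.le.trans (hcf x hx)
  exact (((eventually_all_finite hs).2 hev).and self_mem_nhdsWithin).exists.imp
    fun c hc ↦ ⟨hc.2, hc.1⟩

theorem cfFin_mem_Icc {l : List ℕ} (hl : ∀ x ∈ l, 1 ≤ x) : cfFin l ∈ Icc (0 : ℝ) 1 := by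
  induction l with
  | nil => simp [cfFin]
  | cons a l ih =>
    have ha : (1 : ℝ) ≤ a := mod_cast hl a List.mem_cons_self
    have hx := ih fun x hx ↦ hl x (List.mem_cons_of_mem a hx)
    rw [cfFin, one_div]
    exact ⟨inv_nonneg.2 (by linarith [hx.1]), inv_le_one_of_one_le₀ (by linarith [hx.1])⟩

theorem cfFin_ofFn_succ (a : ℕ → ℕ) (n : ℕ) :
    cfFin (List.ofFn fun i : Fin (n + 1) ↦ a i) =
      1 / (a 0 + cfFin (List.ofFn fun i : Fin n ↦ a (i + 1))) := by
  rw [List.ofFn_succ]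
  rfl

namespace cfLim

variable {a : ℕ → ℕ} {α : ℝ}

theorem mem_Icc (ha : ∀ i, 1 ≤ a i) (h : cfLim a α) : α ∈ Icc (0 : ℝ) 1 :=
  isClosed_Icc.mem_of_tendsto h <| Eventually.of_forall fun n ↦
    cfFin_mem_Icc fun x hx ↦ by
      obtain ⟨i, rfl⟩ := List.mem_ofFn.mp hx
      exact ha i

theorem tail (ha : ∀ i, 1 ≤ a i) (h : cfLim a α) :
    cfLim (fun i ↦ a (i + 1)) (1 / α - a 0) ∧ α = 1 / (a 0 + (1 / α - a 0)) := by
  set T' : ℕ → ℝ := fun n ↦ cfFin (List.ofFn fun i : Fin n ↦ a (i + 1))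
  have hT' : ∀ n, T' n ∈ Icc (0 : ℝ) 1 := fun n ↦ cfFin_mem_Icc fun x hx ↦ by
    obtain ⟨i, rfl⟩ := List.mem_ofFn.mp hx
    exact ha _
  have hshift : Tendsto (fun n ↦ 1 / (a 0 + T' n)) atTop (𝓝 α) :=
    (h.comp (tendsto_add_atTop_nat 1)).congr fun n ↦ cfFin_ofFn_succ a n
  have ha0 : (1 : ℝ) ≤ a 0 := mod_cast ha 0
  have hα : 1 / ((a 0 : ℝ) + 1) ≤ α := ge_of_tendsto' hshift fun n ↦
    one_div_le_one_div_of_le (by linarith [(hT' n).1]) (by linarith [(hT' n).2])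
  have hα0 : α ≠ 0 := (lt_of_lt_of_le (by positivity) hα).ne'
  refine ⟨?_, by rw [add_sub_cancel, one_div_one_div]⟩
  have hinv := (hshift.inv₀ hα0).sub_const (a 0 : ℝ)
  simp only [one_div, inv_inv, add_sub_cancel_left] at hinv
  simpa only [cfLim, one_div] using hinv

end cfLim

theorem Rat.den_inv_sub_natCast_lt {q : ℚ} (h0 : 0 < q) (h1 : q < 1) (n : ℕ) :
    (q⁻¹ - n).den < q.den := by
  rw [Rat.sub_natCast_den, Rat.den_inv_of_ne_zero h0.ne']
  have := Rat.num_lt_denom_iff.2 h1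
  have := Rat.num_pos.2 h0
  omega

def admissibleSlopes (𝒜 : Finset ℕ) : Set ℝ := {α | ∃ a : ℕ → ℕ, (∀ i, a i ∈ 𝒜) ∧ cfLim a α}

section admissibleSlopes

variable {𝒜 : Finset ℕ}

theorem admissibleSlopes_subset_Icc (h𝒜 : ∀ x ∈ 𝒜, 1 ≤ x) : admissibleSlopes 𝒜 ⊆ Icc 0 1 :=
  fun _ ⟨_, ha, hlim⟩ ↦ hlim.mem_Icc fun i ↦ h𝒜 _ (ha i)

theorem exists_eq_one_div_of_mem_admissibleSlopes (h𝒜 : ∀ x ∈ 𝒜, 1 ≤ x) {α : ℝ}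
    (hα : α ∈ admissibleSlopes 𝒜) :
    ∃ a₀ ∈ 𝒜, ∃ β ∈ admissibleSlopes 𝒜, α = 1 / (a₀ + β) := by
  obtain ⟨a, ha, hlim⟩ := hα
  obtain ⟨htail, hα⟩ := hlim.tail fun i ↦ h𝒜 _ (ha i)
  exact ⟨a 0, ha 0, _, ⟨_, fun i ↦ ha (i + 1), htail⟩, hα⟩

theorem exists_pos_le_of_forall_mem_head (h𝒜 : ∀ x ∈ 𝒜, 1 ≤ x) {g : ℝ → ℝ}
    (h : ∀ a₀ ∈ 𝒜, ∃ c > 0, ∀ β ∈ admissibleSlopes 𝒜, c ≤ g (1 / (a₀ + β))) :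
    ∃ c > 0, ∀ α ∈ admissibleSlopes 𝒜, c ≤ g α := by
  obtain ⟨c, hc, hcg⟩ := 𝒜.finite_toSet.exists_pos_forall_le h
  refine ⟨c, hc, fun α hα ↦ ?_⟩
  obtain ⟨a₀, ha₀, β, hβ, rfl⟩ := exists_eq_one_div_of_mem_admissibleSlopes h𝒜 hα
  exact hcg a₀ ha₀ β hβ

theorem exists_pos_le_abs_sub_of_nonpos (h𝒜 : ∀ x ∈ 𝒜, 1 ≤ x) {q : ℝ} (hq : q ≤ 0) :
    ∃ c > 0, ∀ α ∈ admissibleSlopes 𝒜, c ≤ |α - q| := by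
  refine exists_pos_le_of_forall_mem_head h𝒜 fun a₀ ha₀ ↦
    ⟨1 / (a₀ + 1), by positivity, fun β hβ ↦ ?_⟩
  have ha₀ : (1 : ℝ) ≤ a₀ := mod_cast h𝒜 a₀ ha₀
  have hβ := admissibleSlopes_subset_Icc h𝒜 hβ
  have hle : 1 / ((a₀ : ℝ) + 1) ≤ 1 / (a₀ + β) :=
    one_div_le_one_div_of_le (by linarith [hβ.1]) (by linarith [hβ.2])
  rw [abs_of_nonneg (by linarith [hle, one_div_pos.2 (by linarith : (0 : ℝ) < a₀ + 1)])]
  linarith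

/-- One step of the Euclidean algorithm: `1 / (a₀ + β) - q = -q (β - (q⁻¹ - a₀)) / (a₀ + β)`. -/
theorem exists_pos_le_abs_sub_of_pos (h𝒜 : ∀ x ∈ 𝒜, 1 ≤ x) {q : ℝ} (hq : 0 < q)
    (h : ∀ a₀ ∈ 𝒜, ∃ c > 0, ∀ β ∈ admissibleSlopes 𝒜, c ≤ |β - (q⁻¹ - a₀)|) :
    ∃ c > 0, ∀ α ∈ admissibleSlopes 𝒜, c ≤ |α - q| := by
  refine exists_pos_le_of_forall_mem_head h𝒜 fun a₀ ha₀ ↦ ?_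
  obtain ⟨c, hc, hcβ⟩ := h a₀ ha₀
  refine ⟨q * c / (a₀ + 1), by positivity, fun β hβ ↦ ?_⟩
  have ha₀ : (1 : ℝ) ≤ a₀ := mod_cast h𝒜 a₀ ha₀
  have hβ' := admissibleSlopes_subset_Icc h𝒜 hβ
  have hden : 0 < (a₀ : ℝ) + β := by linarith [hβ'.1]
  have hstep : |1 / (a₀ + β) - q| = q * |β - (q⁻¹ - a₀)| / (a₀ + β) := by
    rw [show 1 / (a₀ + β) - q = -q * (β - (q⁻¹ - a₀)) / (a₀ + β) by field_simp; ring,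
      abs_div, abs_mul, abs_neg, abs_of_pos hq, abs_of_pos hden]
  rw [hstep]
  gcongr
  · exact hcβ β hβ
  · linarith [hβ'.2]

theorem exists_pos_le_abs_sub_ratCast (h𝒜 : ∀ x ∈ 𝒜, 1 ≤ x) (q : ℚ) :
    ∃ c > 0, ∀ α ∈ admissibleSlopes 𝒜, c ≤ |α - q| := by
  induction hd : q.den using Nat.strong_induction_on generalizing q with
  | _ d ih =>
  rcases le_or_gt q 0 with hq | hq
  · exact exists_pos_le_abs_sub_of_nonpos h𝒜 (mod_cast hq)
  refine exists_pos_le_abs_sub_of_pos h𝒜 (mod_cast hq) fun a₀ ha₀ ↦ ?_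
  rcases lt_or_ge q 1 with hq1 | hq1
  · simpa using ih _ (hd ▸ Rat.den_inv_sub_natCast_lt hq hq1 a₀) (q⁻¹ - a₀) rfl
  · have ha₀ : (1 : ℝ) ≤ a₀ := mod_cast h𝒜 a₀ ha₀
    refine exists_pos_le_abs_sub_of_nonpos h𝒜 ?_
    linarith [inv_le_one_of_one_le₀ (mod_cast hq1 : (1 : ℝ) ≤ q)]

theorem exists_pos_le_abs_sub_mul (h𝒜 : ∀ x ∈ 𝒜, 1 ≤ x) {u v : ℚ} (huv : u ≠ 0 ∨ v ≠ 0) :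
    ∃ c > 0, ∀ α ∈ admissibleSlopes 𝒜, c ≤ |(v : ℝ) - u * α| := by
  rcases eq_or_ne u 0 with rfl | hu
  · simpa using ⟨|(v : ℝ)|, by simpa using huv, fun _ _ ↦ le_rfl⟩
  obtain ⟨c, hc, hcα⟩ := exists_pos_le_abs_sub_ratCast h𝒜 (v / u)
  have hu' : (u : ℝ) ≠ 0 := mod_cast hu
  refine ⟨|(u : ℝ)| * c, by positivity, fun α hα ↦ ?_⟩
  rw [show (v : ℝ) - u * α = -u * (α - (v / u : ℚ)) by push_cast; field_simp; ring,
    abs_mul, abs_neg]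
  exact mul_le_mul_of_nonneg_left (hcα α hα) (abs_nonneg _)

end admissibleSlopes

theorem Int.finite_setOf_abs_add_le (r R : ℝ) : {m : ℤ | |r + m| ≤ R}.Finite :=
  (Set.finite_Icc ⌊-R - r⌋ ⌈R - r⌉).subset fun m hm ↦ by
    obtain ⟨h₁, h₂⟩ := abs_le.1 (show |r + m| ≤ R from hm)
    exact ⟨Int.floor_le_iff.2 (by linarith), Int.le_ceil_iff.2 (by linarith)⟩

section distance

variable {x y : ℝ} (t u v : ℝ)

/-- `|v x - u y|` is the distance from `(u, v)` to the line through `0` with unit direction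
`(x, y)`. -/
theorem abs_cross_le_sqrt (hxy : x ^ 2 + y ^ 2 = 1) :
    |v * x - u * y| ≤ √((t * x - u) ^ 2 + (t * y - v) ^ 2) :=
  Real.abs_le_sqrt <| by
    nlinarith [sq_nonneg ((t * x - u) * x + (t * y - v) * y)]

theorem max_abs_le_sqrt_add_abs (hxy : x ^ 2 + y ^ 2 = 1) :
    max |u| |v| ≤ √((t * x - u) ^ 2 + (t * y - v) ^ 2) + |t| := by
  have hx : |x| ≤ 1 := (sq_le_one_iff_abs_le_one x).1 (by nlinarith)
  have hy : |y| ≤ 1 := (sq_le_one_iff_abs_le_one y).1 (by nlinarith)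
  have hu : |t * x - u| ≤ √((t * x - u) ^ 2 + (t * y - v) ^ 2) :=
    Real.abs_le_sqrt (by nlinarith)
  have hv : |t * y - v| ≤ √((t * x - u) ^ 2 + (t * y - v) ^ 2) :=
    Real.abs_le_sqrt (by nlinarith)
  have htx : |t * x| ≤ |t| := by rw [abs_mul]; exact mul_le_of_le_one_right (abs_nonneg t) hx
  have hty : |t * y| ≤ |t| := by rw [abs_mul]; exact mul_le_of_le_one_right (abs_nonneg t) hy
  refine max_le ?_ ?_
  · have := abs_sub (t * x) (t * x - u)
    rw [sub_sub_cancel] at this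
    linarith
  · have := abs_sub (t * y) (t * y - v)
    rw [sub_sub_cancel] at this
    linarith

theorem sq_add_sq_div_sqrt_one_add_sq (α : ℝ) :
    (1 / √(1 + α ^ 2)) ^ 2 + (α / √(1 + α ^ 2)) ^ 2 = 1 := by
  rw [div_pow, div_pow, Real.sq_sqrt (by positivity)]
  field_simp

theorem abs_sub_mul_le_two_mul_sqrt {α : ℝ} (hα : α ∈ Icc 0 1) :
    |v - u * α| ≤ 2 * √((t / √(1 + α ^ 2) - u) ^ 2 + (t * α / √(1 + α ^ 2) - v) ^ 2) := by
  have hs : 0 < √(1 + α ^ 2) := Real.sqrt_pos.2 (by positivity)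
  have hs2 : √(1 + α ^ 2) ≤ 2 := (Real.sqrt_le_left zero_le_two).2 (by nlinarith [hα.1, hα.2])
  have hcross := abs_cross_le_sqrt t u v (sq_add_sq_div_sqrt_one_add_sq α)
  rw [show v * (1 / √(1 + α ^ 2)) - u * (α / √(1 + α ^ 2)) = (v - u * α) / √(1 + α ^ 2) by ring,
    abs_div, abs_of_pos hs, div_le_iff₀ hs, mul_one_div, mul_div_assoc'] at hcross
  exact hcross.trans (by rw [mul_comm]; gcongr)

theorem max_abs_sub_abs_le_sqrt (α : ℝ) :
    max |u| |v| - |t| ≤ √((t / √(1 + α ^ 2) - u) ^ 2 + (t * α / √(1 + α ^ 2) - v) ^ 2) := by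
  have := max_abs_le_sqrt_add_abs t u v (sq_add_sq_div_sqrt_one_add_sq α)
  rw [mul_one_div, mul_div_assoc'] at this
  linarith

end distance

theorem stmt17 (𝒜 : Finset ℕ) (h𝒜 : ∀ x ∈ 𝒜, 1 ≤ x) (l : ℝ)
    (q₁ q₂ q₁' q₂' : ℚ)
    (hne : ¬ ∃ m n : ℤ, (q₁' : ℝ) = (q₁ : ℝ) + m ∧ (q₂' : ℝ) = (q₂ : ℝ) + n) :
    ∃ C > 0, ∀ (α : ℝ) (a : ℕ → ℕ), (∀ i, a i ∈ 𝒜) → cfLim a α →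
      ∀ t ∈ Set.Icc (-(l / 2)) (l / 2), ∀ m n : ℤ,
        C < Real.sqrt
          (((q₁ : ℝ) + t / Real.sqrt (1 + α ^ 2) - ((q₁' : ℝ) + m)) ^ 2 +
           ((q₂ : ℝ) + t * α / Real.sqrt (1 + α ^ 2) - ((q₂' : ℝ) + n)) ^ 2) := by
  set u : ℤ → ℚ := fun m ↦ q₁' - q₁ + m
  set v : ℤ → ℚ := fun n ↦ q₂' - q₂ + n
  have hoff : ∀ m n, u m ≠ 0 ∨ v n ≠ 0 := fun m n ↦ not_and_or.1 fun ⟨hu, hv⟩ ↦ by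
    refine hne ⟨-m, -n, ?_, ?_⟩
    · have : q₁' = q₁ + (-m : ℤ) := by push_cast; linarith [show q₁' - q₁ + m = 0 from hu]
      exact_mod_cast this
    · have : q₂' = q₂ + (-n : ℤ) := by push_cast; linarith [show q₂' - q₂ + n = 0 from hv]
      exact_mod_cast this
  set box := {m : ℤ | |(u m : ℝ)| ≤ l / 2 + 1} ×ˢ {n : ℤ | |(v n : ℝ)| ≤ l / 2 + 1}
  have hbox : box.Finite := by
    simp only [box, u, v, Rat.cast_add, Rat.cast_sub, Rat.cast_intCast]
    exact (Int.finite_setOf_abs_add_le _ _).prod (Int.finite_setOf_abs_add_le _ _)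
  obtain ⟨c, hc, hcuv⟩ := hbox.exists_pos_forall_le (T := admissibleSlopes 𝒜)
    (f := fun p α ↦ |(v p.2 : ℝ) - u p.1 * α|) fun p _ ↦ exists_pos_le_abs_sub_mul h𝒜 (hoff _ _)
  refine ⟨min (c / 2) 1 / 2, by positivity, fun α a ha hlim t ht m n ↦ ?_⟩
  have hα : α ∈ admissibleSlopes 𝒜 := ⟨a, ha, hlim⟩
  rw [show (q₁ : ℝ) + t / √(1 + α ^ 2) - (q₁' + m) = t / √(1 + α ^ 2) - u m by
      push_cast [u]; ring,
    show (q₂ : ℝ) + t * α / √(1 + α ^ 2) - (q₂' + n) = t * α / √(1 + α ^ 2) - v n by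
      push_cast [v]; ring]
  refine lt_of_lt_of_le (half_lt_self (by positivity)) ?_
  by_cases hmn : (m, n) ∈ box
  · have := abs_sub_mul_le_two_mul_sqrt t (u m) (v n) (admissibleSlopes_subset_Icc h𝒜 hα)
    linarith [min_le_left (c / 2) 1, hcuv _ hmn α hα]
  · have hR : l / 2 + 1 < max |(u m : ℝ)| |(v n : ℝ)| := by
      simpa only [box, Set.mem_prod, Set.mem_ofPred_eq, not_and_or, not_le, lt_max_iff] using hmn
    linarith [min_le_right (c / 2) 1, abs_le.2 ht, max_abs_sub_abs_le_sqrt t (u m) (v n) α]
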